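/- Let n ≥ 3. Suppose there exists a weighted spherical t-design of generalized corner-vector type on S^{n-1} given by data (a_i, s_i, W_i), i = 1,...,k, such that s_i ≤ n-2 for every index i. Then t ≤ 2n-1. -/

import Mathlib

open MeasureTheory

/-- The generalized corner vector `v_{a,s} = (a^2+s)^{-1/2} (a,1,...,1,0,...,0)`
(with `s` ones after the first coordinate `a`) in `ℝ^n`. -/
noncomputable def cornerVec (n : ℕ) (a : ℝ) (s : ℕ) : EuclideanSpace ℝ (Fin n) :=
  WithLp.toLp 2 fun (i : Fin n) => (Real.sqrt (a ^ 2 + s))⁻¹ *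
    (if (i : ℕ) = 0 then a else if (i : ℕ) ≤ s then 1 else 0)

/-- The orbit `v_{a,s}^{B_n}` of the generalized corner vector under the
hyperoctahedral group (coordinate permutations and sign changes). -/
noncomputable def cornerOrbit (n : ℕ) (a : ℝ) (s : ℕ) : Finset (EuclideanSpace ℝ (Fin n)) :=
  @Finset.image _ _ (Classical.decEq _)
    (fun p : Equiv.Perm (Fin n) × (Fin n → Bool) =>
      (WithLp.toLp 2 fun i => (if p.2 i then (-1 : ℝ) else 1) * cornerVec n a s (p.1 i) :
        EuclideanSpace ℝ (Fin n)))
    Finset.univ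

/-- The average `(1/|S^{n-1}|) ∫_{S^{n-1}} f dρ` of a polynomial over the unit sphere,
with respect to the surface ((n-1)-dimensional Hausdorff) measure. -/
noncomputable def sphereAvg (n : ℕ) (f : MvPolynomial (Fin n) ℝ) : ℝ :=
  ⨍ x in Metric.sphere (0 : EuclideanSpace ℝ (Fin n)) 1,
    MvPolynomial.eval (fun i => x i) f ∂ μH[(n : ℝ) - 1]

/-- The sum `Σ_{x ∈ v_{a,s}^{B_n}} f(x)`. -/
noncomputable def orbitSum (n : ℕ) (a : ℝ) (s : ℕ) (f : MvPolynomial (Fin n) ℝ) : ℝ :=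
  ∑ y ∈ cornerOrbit n a s, MvPolynomial.eval (fun i => y i) f

/-- A weighted spherical `t`-design of generalized corner-vector type on `S^{n-1}`:
the spherical average of every polynomial of total degree at most `t` equals the
weighted sum over the orbits `v_{a_i,s_i}^{B_n}` with weights `W_i`. -/
def isDesign (n t k : ℕ) (a : Fin k → ℝ) (s : Fin k → ℕ) (W : Fin k → ℝ) : Prop :=
  ∀ f : MvPolynomial (Fin n) ℝ, f.totalDegree ≤ t →
    sphereAvg n f = ∑ i, W i * orbitSum n (a i) (s i) f

/-! The points of every orbit `v_{a_i,s_i}^{B_n}` have a zero coordinate when `s_i ≤ n - 2`,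
so the degree-`2n` polynomial `∏ x_i²` vanishes on the design and a `2n`-design would give it
spherical average `0`. But its zero set on the sphere is a union of `(n-2)`-spheres, which is null
for the `(n-1)`-dimensional Hausdorff measure, so its average is positive. That the sphere has
finite positive measure is read off from the design applied to the constant `1`. -/

open MvPolynomial Metric Finset

section Average

variable {α E : Type*} [MeasurableSpace α] [NormedAddCommGroup E] [NormedSpace ℝ E]

theorem measure_ne_zero_and_ne_top_of_setAverage_ne_zero {μ : Measure α} {s : Set α}
    {f : α → E} (h : ⨍ x in s, f x ∂μ ≠ 0) : μ s ≠ 0 ∧ μ s ≠ ⊤ := by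
  rw [setAverage_eq] at h
  have hreal : μ.real s ≠ 0 := fun h0 => h (by rw [h0, inv_zero, zero_smul])
  exact ENNReal.toReal_ne_zero.mp hreal

end Average

theorem EuclideanSpace.hausdorffMeasure_absolutelyContinuous_volume (ι : Type*) [Fintype ι] :
    (μH[Fintype.card ι] : Measure (EuclideanSpace ℝ ι)) ≪ volume := by
  refine Measure.AbsolutelyContinuous.mk fun s hs hs0 => ?_
  have hle := (PiLp.antilipschitzWith_ofLp 2 fun _ : ι => ℝ).le_hausdorffMeasure_image
    (Nat.cast_nonneg (Fintype.card ι)) s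
  have himg : WithLp.ofLp '' s = WithLp.toLp 2 ⁻¹' s := by
    ext x
    exact ⟨by rintro ⟨y, hy, rfl⟩; simpa using hy, fun hx => ⟨_, hx, rfl⟩⟩
  rw [himg, hausdorffMeasure_pi_real, (PiLp.volume_preserving_toLp ι).measure_preimage
    hs.nullMeasurableSet, hs0, mul_zero] at hle
  exact le_antisymm hle zero_le

theorem EuclideanSpace.hausdorffMeasure_sphere_eq_zero {ι : Type*} [Fintype ι] [Nonempty ι]
    (x : EuclideanSpace ℝ ι) (r : ℝ) : μH[Fintype.card ι] (sphere x r) = 0 :=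
  hausdorffMeasure_absolutelyContinuous_volume ι (Measure.addHaar_sphere volume x r)

namespace EuclideanSpace

variable {m : ℕ}

noncomputable def insertZeroCoord (j : Fin (m + 1)) (x : EuclideanSpace ℝ (Fin m)) :
    EuclideanSpace ℝ (Fin (m + 1)) :=
  WithLp.toLp 2 (j.insertNth 0 x.ofLp)

theorem norm_insertZeroCoord (j : Fin (m + 1)) (x : EuclideanSpace ℝ (Fin m)) :
    ‖insertZeroCoord j x‖ = ‖x‖ := by
  simp [EuclideanSpace.norm_eq, Fin.sum_univ_succAbove _ j, insertZeroCoord]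

theorem isometry_insertZeroCoord (j : Fin (m + 1)) : Isometry (insertZeroCoord j) := by
  refine Isometry.of_dist_eq fun x y => ?_
  have hsub : insertZeroCoord j x - insertZeroCoord j y = insertZeroCoord j (x - y) := by
    ext i
    induction i using j.succAboveCases <;> simp [insertZeroCoord]
  rw [dist_eq_norm, dist_eq_norm, hsub, norm_insertZeroCoord]

theorem sphere_inter_coord_eq_zero_subset (j : Fin (m + 1)) (r : ℝ) :
    sphere 0 r ∩ {y | y j = 0} ⊆ insertZeroCoord j '' sphere 0 r := by
  rintro y ⟨hy, hyj : y j = 0⟩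
  have hins : insertZeroCoord j (WithLp.toLp 2 (j.removeNth y.ofLp)) = y := by
    rw [insertZeroCoord, ← hyj]
    exact congrArg (WithLp.toLp 2) (Fin.insertNth_self_removeNth j y.ofLp)
  refine ⟨_, ?_, hins⟩
  rwa [mem_sphere_zero_iff_norm, ← norm_insertZeroCoord j, hins, ← mem_sphere_zero_iff_norm]

theorem hausdorffMeasure_sphere_inter_coord_eq_zero [NeZero m] (j : Fin (m + 1)) (r : ℝ) :
    μH[m] (sphere (0 : EuclideanSpace ℝ (Fin (m + 1))) r ∩ {y | y j = 0}) = 0 := by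
  refine measure_mono_null (sphere_inter_coord_eq_zero_subset j r) ?_
  rw [(isometry_insertZeroCoord j).hausdorffMeasure_image (Or.inl (Nat.cast_nonneg m))]
  simpa using hausdorffMeasure_sphere_eq_zero (0 : EuclideanSpace ℝ (Fin m)) r

theorem hausdorffMeasure_sphere_inter_exists_coord_eq_zero {n : ℕ} (hn : 2 ≤ n) (r : ℝ) :
    μH[(n : ℝ) - 1] {x : EuclideanSpace ℝ (Fin n) | x ∈ sphere 0 r ∧ ∃ j, x j = 0} = 0 := by
  obtain ⟨m, rfl⟩ : ∃ m, n = m + 1 := ⟨n - 1, by omega⟩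
  have : NeZero m := ⟨by omega⟩
  have hset : {x : EuclideanSpace ℝ (Fin (m + 1)) | x ∈ sphere 0 r ∧ ∃ j, x j = 0}
      = ⋃ j, sphere 0 r ∩ {y | y j = 0} := by
    ext x; simp
  rw [hset, Nat.cast_succ, add_sub_cancel_right]
  exact measure_iUnion_null fun j => hausdorffMeasure_sphere_inter_coord_eq_zero j r

end EuclideanSpace

theorem MvPolynomial.totalDegree_prod_X_sq_le {σ R : Type*} [Fintype σ] [CommSemiring R]
    [Nontrivial R] : (∏ i : σ, X i ^ 2 : MvPolynomial σ R).totalDegree ≤ 2 * Fintype.card σ :=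
  (totalDegree_finsetProd _ _).trans_eq (by simp [totalDegree_X_pow, mul_comm])

section CornerOrbit

variable {n : ℕ} {a : ℝ} {s : ℕ}

theorem cornerOrbit_nonempty : (cornerOrbit n a s).Nonempty :=
  @Finset.Nonempty.image _ _ (Classical.decEq _) _ univ_nonempty _

theorem orbitSum_one_pos : 0 < orbitSum n a s 1 := by
  simpa [orbitSum] using cornerOrbit_nonempty (n := n) (a := a) (s := s)

theorem cornerVec_apply_last (h : s + 1 < n) : cornerVec n a s ⟨n - 1, by omega⟩ = 0 := by
  have h0 : n - 1 ≠ 0 := by omega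
  have hs : ¬ n - 1 ≤ s := by omega
  simp [cornerVec, h0, hs]

theorem exists_coord_eq_zero_of_mem_cornerOrbit (h : s + 1 < n)
    {y : EuclideanSpace ℝ (Fin n)} (hy : y ∈ cornerOrbit n a s) : ∃ j, y j = 0 := by
  obtain ⟨⟨σ, ε⟩, -, rfl⟩ := (@Finset.mem_image _ _ (Classical.decEq _) _ _ _).mp hy
  exact ⟨σ.symm ⟨n - 1, by omega⟩, by simp [cornerVec_apply_last h]⟩

theorem orbitSum_prod_X_sq_eq_zero (h : s + 1 < n) :
    orbitSum n a s (∏ i, X i ^ 2) = 0 := by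
  refine Finset.sum_eq_zero fun y hy => ?_
  obtain ⟨j, hj⟩ := exists_coord_eq_zero_of_mem_cornerOrbit h hy
  simpa using Finset.prod_eq_zero (mem_univ j) (by rw [hj]; ring : y j ^ 2 = 0)

end CornerOrbit

theorem sphereAvg_prod_X_sq_pos {n : ℕ} (hn : 2 ≤ n)
    (h0 : μH[(n : ℝ) - 1] (sphere (0 : EuclideanSpace ℝ (Fin n)) 1) ≠ 0)
    (htop : μH[(n : ℝ) - 1] (sphere (0 : EuclideanSpace ℝ (Fin n)) 1) ≠ ⊤) :
    0 < sphereAvg n (∏ i, X i ^ 2) := by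
  set f : EuclideanSpace ℝ (Fin n) → ℝ := fun x => ∏ i, x i ^ 2
  have hf : Continuous f := by fun_prop
  by_contra! hle
  have hint : IntegrableOn f (sphere 0 1) μH[(n : ℝ) - 1] :=
    hf.continuousOn.integrableOn_of_subset_isCompact (isCompact_sphere 0 1)
      isClosed_sphere.measurableSet subset_rfl htop
  -- first moment method: `f` is at most its average on a set of positive measure
  have hpos := measure_le_setAverage_pos h0 htop hint
  refine hpos.ne' (measure_mono_null ?_
    (EuclideanSpace.hausdorffMeasure_sphere_inter_exists_coord_eq_zero hn 1))
  rintro x ⟨hx, hfx⟩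
  have hfx0 : f x = 0 := le_antisymm (hfx.trans (by simpa [sphereAvg, f] using hle))
    (by positivity)
  obtain ⟨j, -, hj⟩ := Finset.prod_eq_zero_iff.mp hfx0
  exact ⟨hx, j, pow_eq_zero_iff two_ne_zero |>.mp hj⟩

theorem degree_bound_of_s_le_general (n t k : ℕ) (hn : 3 ≤ n) (hk : 1 ≤ k)
    (a : Fin k → ℝ) (s : Fin k → ℕ) (W : Fin k → ℝ)
    (hW : ∀ i, 0 < W i)
    (hsmall : ∀ i, s i ≤ n - 2)
    (hd : isDesign n t k a s W) :
    t ≤ 2 * n - 1 := by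
  by_contra! ht
  have hone : sphereAvg n 1 ≠ 0 := by
    rw [hd 1 (by simp)]
    exact (Finset.sum_pos (fun i _ => mul_pos (hW i) orbitSum_one_pos)
      (univ_nonempty_iff.mpr ⟨⟨0, hk⟩⟩)).ne'
  obtain ⟨h0, htop⟩ := measure_ne_zero_and_ne_top_of_setAverage_ne_zero hone
  have hzero : sphereAvg n (∏ i, X i ^ 2) = 0 := by
    rw [hd _ (totalDegree_prod_X_sq_le.trans (by rw [Fintype.card_fin]; omega))]
    exact Finset.sum_eq_zero fun i _ => by
      rw [orbitSum_prod_X_sq_eq_zero (by have := hsmall i; omega), mul_zero]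
  exact (sphereAvg_prod_X_sq_pos (by omega) h0 htop).ne' hzero

/-- If every `s_i ≤ n-2`, the degree is at most `2n-1`. -/
theorem degree_bound_of_s_le (n t k : ℕ) (hn : 3 ≤ n) (hk : 1 ≤ k)
    (a : Fin k → ℝ) (s : Fin k → ℕ) (W : Fin k → ℝ)
    (ha : ∀ i, 0 < a i) (hs : ∀ i, s i ≤ n - 1) (hW : ∀ i, 0 < W i)
    (hsmall : ∀ i, s i ≤ n - 2)
    (hd : isDesign n t k a s W) :
    t ≤ 2 * n - 1 :=
  degree_bound_of_s_le_general n t k hn hk a s W hW hsmall hd
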